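/- arXiv:math/0602435 — 9 statements merged into one kernel-verified Lean document; each statement's English description precedes it below -/
import Mathlib

section
/- Let h : ℝ → ℝ be continuously differentiable. Define χ on the half-plane {(ξ,η) ∈ ℝ² : ξ > 0} by χ(ξ,η) = ρ·h(θ − ln ρ), where ρ = √(ξ² + η²) and θ = arctan(η/ξ). Then χ satisfies the invariance equation χ − (ξ − η)·χ_ξ − (ξ + η)·χ_η = 0 at every point of {ξ > 0}. -/
/-!
In polar coordinates `ξ χ_ξ + η χ_η = ρ χ_ρ` and `ξ χ_η - η χ_ξ = χ_θ`, so the operator is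
`χ - ρ χ_ρ - χ_θ`. For `χ = ρ h(θ - ln ρ)` one gets `ρ χ_ρ = ρ h - ρ h'` and `χ_θ = ρ h'`,
whose sum is `χ`.
-/

open Real

noncomputable def polarRadius (ξ η : ℝ) : ℝ := √(ξ ^ 2 + η ^ 2)

/-- The polar angle, valid only on the half-plane `ξ > 0`. -/
noncomputable def polarAngle (ξ η : ℝ) : ℝ := arctan (η / ξ)

noncomputable def spiralAnsatz (h : ℝ → ℝ) (ξ η : ℝ) : ℝ :=
  polarRadius ξ η * h (polarAngle ξ η - log (polarRadius ξ η))

theorem polarRadius_sq (ξ η : ℝ) : polarRadius ξ η ^ 2 = ξ ^ 2 + η ^ 2 :=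
  sq_sqrt (by positivity)

theorem polarRadius_ne_zero {ξ η : ℝ} (hr : ξ ^ 2 + η ^ 2 ≠ 0) : polarRadius ξ η ≠ 0 :=
  sqrt_ne_zero'.mpr (by positivity)

section Curve

variable {x y : ℝ → ℝ} {x' y' s : ℝ}

theorem HasDerivAt.polarRadius (hx : HasDerivAt x x' s) (hy : HasDerivAt y y' s)
    (hr : x s ^ 2 + y s ^ 2 ≠ 0) :
    HasDerivAt (fun t => _root_.polarRadius (x t) (y t))
      ((x s * x' + y s * y') / _root_.polarRadius (x s) (y s)) s := by
  have hsq : HasDerivAt (fun t => x t ^ 2 + y t ^ 2) (2 * x s * x' + 2 * y s * y') s := by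
    refine ((hx.fun_pow 2).fun_add (hy.fun_pow 2)).congr_deriv ?_
    push_cast
    ring
  refine (hsq.sqrt hr).congr_deriv ?_
  unfold _root_.polarRadius
  field_simp

theorem HasDerivAt.log_polarRadius (hx : HasDerivAt x x' s) (hy : HasDerivAt y y' s)
    (hr : x s ^ 2 + y s ^ 2 ≠ 0) :
    HasDerivAt (fun t => Real.log (_root_.polarRadius (x t) (y t)))
      ((x s * x' + y s * y') / (x s ^ 2 + y s ^ 2)) s := by
  refine ((hx.polarRadius hy hr).log (polarRadius_ne_zero hr)).congr_deriv ?_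
  rw [div_div, ← sq, polarRadius_sq]

theorem HasDerivAt.polarAngle (hx : HasDerivAt x x' s) (hy : HasDerivAt y y' s)
    (hx0 : x s ≠ 0) :
    HasDerivAt (fun t => _root_.polarAngle (x t) (y t))
      ((x s * y' - y s * x') / (x s ^ 2 + y s ^ 2)) s := by
  refine (hy.fun_div hx hx0).arctan.congr_deriv ?_
  field_simp

theorem HasDerivAt.spiralAnsatz {h : ℝ → ℝ} {h' : ℝ}
    (hx : HasDerivAt x x' s) (hy : HasDerivAt y y' s) (hx0 : x s ≠ 0)
    (hh : HasDerivAt h h'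
      (_root_.polarAngle (x s) (y s) - Real.log (_root_.polarRadius (x s) (y s)))) :
    HasDerivAt (fun t => _root_.spiralAnsatz h (x t) (y t))
      ((x s * x' + y s * y') / _root_.polarRadius (x s) (y s) *
          h (_root_.polarAngle (x s) (y s) - Real.log (_root_.polarRadius (x s) (y s))) +
        _root_.polarRadius (x s) (y s) * h' *
          ((x s * y' - y s * x' - (x s * x' + y s * y')) / (x s ^ 2 + y s ^ 2))) s := by
  have hr : x s ^ 2 + y s ^ 2 ≠ 0 := by positivity
  refine ((hx.polarRadius hy hr).mul (hh.comp s
    ((hx.polarAngle hy hx0).fun_sub (hx.log_polarRadius hy hr)))).congr_deriv ?_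
  simp only [Function.comp_apply]
  ring

end Curve

/-- The generating section `φ` of rotation composed with dilation. -/
noncomputable def rotationDilationSection (χ : ℝ → ℝ → ℝ) (ξ η : ℝ) : ℝ :=
  χ ξ η - (ξ - η) * deriv (fun s => χ s η) ξ - (ξ + η) * deriv (fun t => χ ξ t) η

theorem rotationDilationSection_spiralAnsatz {h : ℝ → ℝ} {ξ : ℝ} (η : ℝ) (hξ : ξ ≠ 0)
    (hh : DifferentiableAt ℝ h (polarAngle ξ η - log (polarRadius ξ η))) :
    rotationDilationSection (spiralAnsatz h) ξ η = 0 := by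
  rw [rotationDilationSection,
    ((hasDerivAt_id' (x := ξ)).spiralAnsatz (hasDerivAt_const ξ η) hξ hh.hasDerivAt).deriv,
    ((hasDerivAt_const η ξ).spiralAnsatz (hasDerivAt_id' (x := η)) hξ hh.hasDerivAt).deriv,
    spiralAnsatz]
  have hρ : polarRadius ξ η ≠ 0 := polarRadius_ne_zero (by positivity)
  field_simp
  linear_combination
    (ξ ^ 2 + η ^ 2) * h (polarAngle ξ η - log (polarRadius ξ η)) * polarRadius_sq ξ η

/-- The spiral ansatz `χ(ξ,η) = ρ·h(θ − ln ρ)` (with `ρ = √(ξ²+η²)`,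
`θ = arctan(η/ξ)`) satisfies the invariance equation
`χ − (ξ − η)·χ_ξ − (ξ + η)·χ_η = 0` on the half-plane `ξ > 0`. -/
theorem spiral_ansatz_is_phi_invariant
    (h : ℝ → ℝ) (hh : ContDiff ℝ 1 h)
    (χ : ℝ → ℝ → ℝ)
    (hχ : ∀ ξ η : ℝ, χ ξ η =
      Real.sqrt (ξ ^ 2 + η ^ 2) *
        h (Real.arctan (η / ξ) - Real.log (Real.sqrt (ξ ^ 2 + η ^ 2)))) :
    ∀ ξ η : ℝ, 0 < ξ →
      χ ξ η - (ξ - η) * deriv (fun s => χ s η) ξ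
        - (ξ + η) * deriv (fun s => χ ξ s) η = 0 := by
  obtain rfl : χ = spiralAnsatz h := funext₂ hχ
  intro ξ η hξ
  exact rotationDilationSection_spiralAnsatz η hξ.ne' (hh.differentiable one_ne_zero _)
end

section
/- Let ω : (0,∞) → ℝ be twice continuously differentiable and define W on the half-plane {(p,q) ∈ ℝ² : p > 0} by W(p,q) = ω(√(p² + q²))·exp(arctan(q/p)). Then: (i) W satisfies the equation W + q·W_p − p·W_q = 0 at every point of {p > 0}; (ii) if moreover ρ²·(1 + ρ²)·ω''(ρ) + ρ·ω'(ρ) + ω(ρ) = 0 for all ρ > 0, then W satisfies the linear elliptic equation (1 + p²)·W_pp + 2·p·q·W_pq + (1 + q²)·W_qq = 0 at every point of {p > 0}. -/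
/-!
Write `ρ = √(p² + q²)` and `θ = arctan (q / p)`. The first partial derivatives of `f(ρ)·e^θ`
are again combinations of functions of the same shape:
`∂_p (f(ρ) e^θ) = p·(f'/ρ)(ρ) e^θ − q·(f/ρ²)(ρ) e^θ` and
`∂_q (f(ρ) e^θ) = q·(f'/ρ)(ρ) e^θ + p·(f/ρ²)(ρ) e^θ`.
Hence `W + q W_p − p W_q = (ω(ρ) − (p² + q²) ω(ρ)/ρ²) e^θ = 0`, and applying the rule once more
to `ω'/ρ` and `ω/ρ²` gives
`(1 + p²) W_pp + 2pq W_pq + (1 + q²) W_qq = (ρ²(1 + ρ²) ω'' + ρ ω' + ω)/ρ² · e^θ`.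
-/

open Real

noncomputable def radialExpAngle (f : ℝ → ℝ) (p q : ℝ) : ℝ :=
  f √(p ^ 2 + q ^ 2) * exp (arctan (q / p))

section
variable {f : ℝ → ℝ} {p q : ℝ}

theorem sq_add_sq_pos_of_left_ne_zero (hp : p ≠ 0) : 0 < p ^ 2 + q ^ 2 := by positivity

theorem hasDerivAt_radialExpAngle_left (hp : p ≠ 0)
    (hf : DifferentiableAt ℝ f √(p ^ 2 + q ^ 2)) :
    HasDerivAt (radialExpAngle f · q)
      (p * radialExpAngle (fun r => deriv f r / r) p q
        - q * radialExpAngle (fun r => f r / r ^ 2) p q) p := by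
  have hs := sq_add_sq_pos_of_left_ne_zero (q := q) hp
  have hρ := ((hasDerivAt_pow 2 p).add_const (q ^ 2)).sqrt hs.ne'
  have hθ := (((hasDerivAt_const p q).div (hasDerivAt_id p) hp).arctan).exp
  refine ((hf.hasDerivAt.comp p hρ).mul hθ).congr_deriv ?_
  have hρ0 : √(p ^ 2 + q ^ 2) ≠ 0 := (sqrt_pos.2 hs).ne'
  simp only [radialExpAngle, Function.comp_apply, Pi.div_apply, id_eq, sq_sqrt hs.le]
  field_simp
  ring

theorem hasDerivAt_radialExpAngle_right (hp : p ≠ 0)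
    (hf : DifferentiableAt ℝ f √(p ^ 2 + q ^ 2)) :
    HasDerivAt (radialExpAngle f p ·)
      (q * radialExpAngle (fun r => deriv f r / r) p q
        + p * radialExpAngle (fun r => f r / r ^ 2) p q) q := by
  have hs := sq_add_sq_pos_of_left_ne_zero (q := q) hp
  have hρ := ((hasDerivAt_pow 2 q).const_add (p ^ 2)).sqrt hs.ne'
  have hθ := (((hasDerivAt_id q).div_const p).arctan).exp
  refine ((hf.hasDerivAt.comp q hρ).mul hθ).congr_deriv ?_
  have hρ0 : √(p ^ 2 + q ^ 2) ≠ 0 := (sqrt_pos.2 hs).ne'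
  simp only [radialExpAngle, Function.comp_apply, id_eq, sq_sqrt hs.le]
  field_simp
  ring

theorem deriv_radialExpAngle_left (hf : DifferentiableOn ℝ f (Set.Ioi 0)) (hp : p ≠ 0) :
    deriv (radialExpAngle f · q) p
      = p * radialExpAngle (fun r => deriv f r / r) p q
        - q * radialExpAngle (fun r => f r / r ^ 2) p q :=
  (hasDerivAt_radialExpAngle_left hp <| hf.differentiableAt <|
    Ioi_mem_nhds <| sqrt_pos.2 <| sq_add_sq_pos_of_left_ne_zero hp).deriv

theorem deriv_radialExpAngle_right (hf : DifferentiableOn ℝ f (Set.Ioi 0)) (hp : p ≠ 0) :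
    deriv (radialExpAngle f p ·) q
      = q * radialExpAngle (fun r => deriv f r / r) p q
        + p * radialExpAngle (fun r => f r / r ^ 2) p q :=
  (hasDerivAt_radialExpAngle_right hp <| hf.differentiableAt <|
    Ioi_mem_nhds <| sqrt_pos.2 <| sq_add_sq_pos_of_left_ne_zero hp).deriv

theorem radialExpAngle_add_mul_deriv_sub_mul_deriv (hf : DifferentiableOn ℝ f (Set.Ioi 0))
    (hp : p ≠ 0) :
    radialExpAngle f p q + q * deriv (radialExpAngle f · q) p
      - p * deriv (radialExpAngle f p ·) q = 0 := by
  have hs := sq_add_sq_pos_of_left_ne_zero (q := q) hp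
  rw [deriv_radialExpAngle_left hf hp, deriv_radialExpAngle_right hf hp]
  simp only [radialExpAngle, sq_sqrt hs.le]
  field_simp
  ring

theorem deriv_deriv_radialExpAngle_left_left (hf : DifferentiableOn ℝ f (Set.Ioi 0)) (hp : p ≠ 0)
    (hA : DifferentiableAt ℝ (fun r => deriv f r / r) √(p ^ 2 + q ^ 2))
    (hB : DifferentiableAt ℝ (fun r => f r / r ^ 2) √(p ^ 2 + q ^ 2)) :
    deriv (fun s => deriv (radialExpAngle f · q) s) p
      = radialExpAngle (fun r => deriv f r / r) p q
        + p * deriv (radialExpAngle (fun r => deriv f r / r) · q) p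
        - q * deriv (radialExpAngle (fun r => f r / r ^ 2) · q) p := by
  have h : deriv (radialExpAngle f · q) =ᶠ[nhds p] fun s =>
      s * radialExpAngle (fun r => deriv f r / r) s q
        - q * radialExpAngle (fun r => f r / r ^ 2) s q := by
    filter_upwards [isOpen_ne.mem_nhds hp] with s hs using deriv_radialExpAngle_left hf hs
  have hA' := (hasDerivAt_radialExpAngle_left hp hA).differentiableAt.hasDerivAt
  have hB' := (hasDerivAt_radialExpAngle_left hp hB).differentiableAt.hasDerivAt
  rw [h.deriv_eq]
  exact (((hasDerivAt_id' p).mul hA').sub (hB'.const_mul q)).deriv.trans (by ring)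

theorem deriv_deriv_radialExpAngle_left_right (hf : DifferentiableOn ℝ f (Set.Ioi 0)) (hp : p ≠ 0)
    (hA : DifferentiableAt ℝ (fun r => deriv f r / r) √(p ^ 2 + q ^ 2))
    (hB : DifferentiableAt ℝ (fun r => f r / r ^ 2) √(p ^ 2 + q ^ 2)) :
    deriv (fun t => deriv (radialExpAngle f · t) p) q
      = p * deriv (radialExpAngle (fun r => deriv f r / r) p ·) q
        - radialExpAngle (fun r => f r / r ^ 2) p q
        - q * deriv (radialExpAngle (fun r => f r / r ^ 2) p ·) q := by
  simp_rw [deriv_radialExpAngle_left hf hp]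
  have hA' := (hasDerivAt_radialExpAngle_right hp hA).differentiableAt.hasDerivAt
  have hB' := (hasDerivAt_radialExpAngle_right hp hB).differentiableAt.hasDerivAt
  exact ((hA'.const_mul p).sub ((hasDerivAt_id' q).mul hB')).deriv.trans (by ring)

theorem deriv_deriv_radialExpAngle_right_right (hf : DifferentiableOn ℝ f (Set.Ioi 0)) (hp : p ≠ 0)
    (hA : DifferentiableAt ℝ (fun r => deriv f r / r) √(p ^ 2 + q ^ 2))
    (hB : DifferentiableAt ℝ (fun r => f r / r ^ 2) √(p ^ 2 + q ^ 2)) :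
    deriv (fun t => deriv (radialExpAngle f p ·) t) q
      = radialExpAngle (fun r => deriv f r / r) p q
        + q * deriv (radialExpAngle (fun r => deriv f r / r) p ·) q
        + p * deriv (radialExpAngle (fun r => f r / r ^ 2) p ·) q := by
  simp_rw [deriv_radialExpAngle_right hf hp]
  have hA' := (hasDerivAt_radialExpAngle_right hp hA).differentiableAt.hasDerivAt
  have hB' := (hasDerivAt_radialExpAngle_right hp hB).differentiableAt.hasDerivAt
  exact (((hasDerivAt_id' q).mul hA').add (hB'.const_mul p)).deriv.trans (by ring)

theorem legendreOperator_radialExpAngle (hf : ContDiffOn ℝ 2 f (Set.Ioi 0)) (hp : p ≠ 0) :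
    (1 + p ^ 2) * deriv (fun s => deriv (radialExpAngle f · q) s) p
      + 2 * p * q * deriv (fun t => deriv (radialExpAngle f · t) p) q
      + (1 + q ^ 2) * deriv (fun t => deriv (radialExpAngle f p ·) t) q
      = (√(p ^ 2 + q ^ 2) ^ 2 * (1 + √(p ^ 2 + q ^ 2) ^ 2) * deriv (deriv f) √(p ^ 2 + q ^ 2)
          + √(p ^ 2 + q ^ 2) * deriv f √(p ^ 2 + q ^ 2) + f √(p ^ 2 + q ^ 2))
        / √(p ^ 2 + q ^ 2) ^ 2 * exp (arctan (q / p)) := by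
  have hs := sq_add_sq_pos_of_left_ne_zero (q := q) hp
  set ρ := √(p ^ 2 + q ^ 2) with hρ_def
  have hρ : 0 < ρ := sqrt_pos.2 hs
  have hρ2 : ρ ^ 2 = p ^ 2 + q ^ 2 := sq_sqrt hs.le
  have hf1 : DifferentiableOn ℝ f (Set.Ioi 0) := hf.differentiableOn two_ne_zero
  have hf' : HasDerivAt f (deriv f ρ) ρ :=
    (hf1.differentiableAt (Ioi_mem_nhds hρ)).hasDerivAt
  have hf2 : DifferentiableOn ℝ (deriv f) (Set.Ioi 0) :=
    (hf.deriv_of_isOpen (m := 1) isOpen_Ioi (by norm_num)).differentiableOn one_ne_zero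
  have hf'' : HasDerivAt (deriv f) (deriv (deriv f) ρ) ρ :=
    (hf2.differentiableAt (Ioi_mem_nhds hρ)).hasDerivAt
  have hA : HasDerivAt (fun r => deriv f r / r)
      ((deriv (deriv f) ρ * ρ - deriv f ρ * 1) / ρ ^ 2) ρ :=
    hf''.div (hasDerivAt_id ρ) hρ.ne'
  have hB : HasDerivAt (fun r => f r / r ^ 2)
      ((deriv f ρ * ρ ^ 2 - f ρ * (2 * ρ)) / (ρ ^ 2) ^ 2) ρ :=
    (hf'.div (hasDerivAt_pow 2 ρ) (pow_ne_zero 2 hρ.ne')).congr_deriv (by norm_num)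
  rw [deriv_deriv_radialExpAngle_left_left hf1 hp hA.differentiableAt hB.differentiableAt,
    deriv_deriv_radialExpAngle_left_right hf1 hp hA.differentiableAt hB.differentiableAt,
    deriv_deriv_radialExpAngle_right_right hf1 hp hA.differentiableAt hB.differentiableAt,
    (hasDerivAt_radialExpAngle_left hp hA.differentiableAt).deriv,
    (hasDerivAt_radialExpAngle_left hp hB.differentiableAt).deriv,
    (hasDerivAt_radialExpAngle_right hp hA.differentiableAt).deriv,
    (hasDerivAt_radialExpAngle_right hp hB.differentiableAt).deriv]
  simp only [radialExpAngle, ← hρ_def]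
  rw [hA.deriv, hB.deriv]
  field_simp
  linear_combination (deriv f ρ * ρ * (1 + p ^ 2 + q ^ 2) - 2 * f ρ * p * q - f ρ
    - deriv (deriv f) ρ * ρ ^ 2 * (1 + ρ ^ 2 + p ^ 2 + q ^ 2)) * hρ2

end

/-- For `W(p,q) = ω(√(p²+q²))·exp(arctan(q/p))` with `ω` twice continuously
differentiable on `(0,∞)`: (i) `W + q·W_p − p·W_q = 0` on `{p > 0}`; and
(ii) if `ρ²(1+ρ²)ω'' + ρω' + ω = 0` on `(0,∞)`, then
`(1+p²)W_pp + 2pq·W_pq + (1+q²)W_qq = 0` on `{p > 0}`. -/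
theorem legendre_separated_solution
    (ω : ℝ → ℝ) (hω : ContDiffOn ℝ 2 ω (Set.Ioi 0))
    (W : ℝ → ℝ → ℝ)
    (hW : ∀ p q : ℝ, W p q =
      ω (Real.sqrt (p ^ 2 + q ^ 2)) * Real.exp (Real.arctan (q / p)))
    (Wp Wq : ℝ → ℝ → ℝ)
    (hWp : ∀ p q : ℝ, Wp p q = deriv (fun s => W s q) p)
    (hWq : ∀ p q : ℝ, Wq p q = deriv (fun s => W p s) q) :
    (∀ p q : ℝ, 0 < p → W p q + q * Wp p q - p * Wq p q = 0) ∧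
    ((∀ ρ : ℝ, 0 < ρ →
        ρ ^ 2 * (1 + ρ ^ 2) * deriv (deriv ω) ρ + ρ * deriv ω ρ + ω ρ = 0) →
      ∀ p q : ℝ, 0 < p →
        (1 + p ^ 2) * deriv (fun s => Wp s q) p
          + 2 * p * q * deriv (fun s => Wp p s) q
          + (1 + q ^ 2) * deriv (fun s => Wq p s) q = 0) := by
  obtain rfl : W = radialExpAngle ω := funext₂ hW
  obtain rfl : Wp = fun p q => deriv (radialExpAngle ω · q) p := funext₂ hWp
  obtain rfl : Wq = fun p q => deriv (radialExpAngle ω p ·) q := funext₂ hWq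
  refine ⟨fun p q hp => ?_, fun hode p q hp => ?_⟩
  · exact radialExpAngle_add_mul_deriv_sub_mul_deriv (hω.differentiableOn two_ne_zero) hp.ne'
  · rw [legendreOperator_radialExpAngle hω hp.ne',
      hode _ (sqrt_pos.2 (sq_add_sq_pos_of_left_ne_zero hp.ne')), zero_div, zero_mul]
end

section
/- Let z₁, z₂ : ℝ → ℝ be differentiable functions satisfying dz₁/dt = z₁ + z₂ + 4(z₁³ + z₂³), dz₂/dt = −z₁ + z₂ + 4z₂(2z₁² − z₁z₂ + z₂²). Suppose r, φ : ℝ → ℝ are differentiable with r(t) > 0, z₁(t) = r(t)·cos φ(t) and z₂(t) = r(t)·sin φ(t) for all t. Then dr/dt = r + 4r³ and dφ/dt = −1 + 4r²·sin φ·(cos φ − sin φ) for all t. -/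
/-- In polar coordinates `z₁ = r cos φ`, `z₂ = r sin φ` (with `r > 0`), the
system `z₁' = z₁ + z₂ + 4(z₁³ + z₂³)`,
`z₂' = −z₁ + z₂ + 4z₂(2z₁² − z₁z₂ + z₂²)` becomes the triangular system
`r' = r + 4r³`, `φ' = −1 + 4r²·sin φ·(cos φ − sin φ)`. -/
theorem phase_system_in_polar_coordinates
    (z₁ z₂ r φ : ℝ → ℝ)
    (hz₁ : Differentiable ℝ z₁) (hz₂ : Differentiable ℝ z₂)
    (hz₁' : ∀ t : ℝ, deriv z₁ t = z₁ t + z₂ t + 4 * (z₁ t ^ 3 + z₂ t ^ 3))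
    (hz₂' : ∀ t : ℝ, deriv z₂ t =
      -z₁ t + z₂ t + 4 * z₂ t * (2 * z₁ t ^ 2 - z₁ t * z₂ t + z₂ t ^ 2))
    (hr : Differentiable ℝ r) (hφ : Differentiable ℝ φ)
    (hrpos : ∀ t : ℝ, 0 < r t)
    (hpolar₁ : ∀ t : ℝ, z₁ t = r t * Real.cos (φ t))
    (hpolar₂ : ∀ t : ℝ, z₂ t = r t * Real.sin (φ t)) :
    (∀ t : ℝ, deriv r t = r t + 4 * r t ^ 3) ∧
    (∀ t : ℝ, deriv φ t =
      -1 + 4 * r t ^ 2 * Real.sin (φ t) * (Real.cos (φ t) - Real.sin (φ t))) := by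
  have hz1eq : z₁ = fun t => r t * Real.cos (φ t) := funext hpolar₁
  have hz2eq : z₂ = fun t => r t * Real.sin (φ t) := funext hpolar₂
  have key : ∀ t : ℝ,
      deriv r t = r t + 4 * r t ^ 3 ∧
      deriv φ t = -1 + 4 * r t ^ 2 * Real.sin (φ t)
        * (Real.cos (φ t) - Real.sin (φ t)) := by
    intro t
    set a := deriv r t with ha
    set b := deriv φ t with hb
    set R := r t with hR
    set c := Real.cos (φ t) with hc
    set s := Real.sin (φ t) with hs
    have pyth : c ^ 2 + s ^ 2 = 1 := by
      rw [hc, hs]; exact Real.cos_sq_add_sin_sq (φ t)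
    have hd1 : HasDerivAt z₁ (a * c + R * (-s * b)) t := by
      rw [hz1eq]
      exact (hr t).hasDerivAt.mul
        ((Real.hasDerivAt_cos (φ t)).comp t (hφ t).hasDerivAt)
    have hd2 : HasDerivAt z₂ (a * s + R * (c * b)) t := by
      rw [hz2eq]
      exact (hr t).hasDerivAt.mul
        ((Real.hasDerivAt_sin (φ t)).comp t (hφ t).hasDerivAt)
    have E1 : a * c + R * (-s * b)
        = R * c + R * s + 4 * ((R * c) ^ 3 + (R * s) ^ 3) := by
      rw [← hd1.deriv, hz₁' t, hpolar₁ t, hpolar₂ t]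
    have E2 : a * s + R * (c * b)
        = -(R * c) + R * s
          + 4 * (R * s) * (2 * (R * c) ^ 2 - (R * c) * (R * s) + (R * s) ^ 2) := by
      rw [← hd2.deriv, hz₂' t, hpolar₁ t, hpolar₂ t]
    have goal1 : a = R + 4 * R ^ 3 := by
      linear_combination c * E1 + s * E2
        + ((R - a) + 4 * R ^ 3 * (c ^ 2 + s ^ 2 + 1)) * pyth
    have hRb : R * b = R * (-1 + 4 * R ^ 2 * s * (c - s)) := by
      linear_combination c * E2 - s * E1
        - (R * b + R - 4 * R ^ 3 * s * (c - s)) * pyth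
    have goal2 : b = -1 + 4 * R ^ 2 * s * (c - s) :=
      mul_left_cancel₀ (ne_of_gt (hrpos t)) hRb
    exact ⟨goal1, goal2⟩
  exact ⟨fun t => (key t).1, fun t => (key t).2⟩
end

section
/- Let x, y : ℝ → ℝ be differentiable functions satisfying the autonomous system dx/dt = 2y + y·x², dy/dt = 2y − x + y³ − (x − y)³, and suppose the solution (x, y) is periodic, i.e. there exists T > 0 with x(t + T) = x(t) and y(t + T) = y(t) for all t. Then x(t) = 0 and y(t) = 0 for all t. -/
/-!
The quantity `R = y² + (y - x)²`, four times the squared polar radius in the coordinates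
`z₁ = y/2`, `z₂ = (y - x)/2`, obeys `R' = 2R + 2R² ≥ 2R`. Hence `e^{-2t} R(t)` is nondecreasing,
which is incompatible with periodicity of `R` unless `R ≤ 0`; as `R ≥ 0`, the solution vanishes.
-/

open Real

section GrowthBound

variable {f f' : ℝ → ℝ} {c : ℝ}

theorem monotone_exp_neg_mul_mul_of_mul_le_deriv (hf : ∀ t, HasDerivAt f (f' t) t)
    (hle : ∀ t, c * f t ≤ f' t) : Monotone fun t => exp (-c * t) * f t := by
  have hg : ∀ t, HasDerivAt (fun t => exp (-c * t) * f t)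
      (exp (-c * t) * (f' t - c * f t)) t := by
    intro t
    have hexp : HasDerivAt (fun t => exp (-c * t)) (exp (-c * t) * -c) t := by
      simpa using ((hasDerivAt_id t).const_mul (-c)).exp
    exact (hexp.mul (hf t)).congr_deriv (by ring)
  refine monotone_of_deriv_nonneg (fun t => (hg t).differentiableAt) fun t => ?_
  rw [(hg t).deriv]
  exact mul_nonneg (exp_pos _).le (sub_nonneg.mpr (hle t))

theorem Function.Periodic.nonpos_of_mul_le_deriv {T : ℝ} (hper : Function.Periodic f T)
    (hT : 0 < T) (hc : 0 < c) (hf : ∀ t, HasDerivAt f (f' t) t)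
    (hle : ∀ t, c * f t ≤ f' t) (t : ℝ) : f t ≤ 0 := by
  have hmono : exp (-c * t) * f t ≤ exp (-c * (t + T)) * f (t + T) :=
    monotone_exp_neg_mul_mul_of_mul_le_deriv hf hle (by linarith)
  have hdecay : exp (-c * (t + T)) < exp (-c * t) := exp_lt_exp.mpr (by nlinarith)
  rw [hper t] at hmono
  nlinarith

end GrowthBound

section PhaseSystem

variable {x y : ℝ → ℝ} {t : ℝ}

def phaseRadiusSq (x y : ℝ → ℝ) (t : ℝ) : ℝ := y t ^ 2 + (y t - x t) ^ 2

theorem phaseRadiusSq_nonneg : 0 ≤ phaseRadiusSq x y t := by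
  unfold phaseRadiusSq; positivity

theorem eq_zero_of_phaseRadiusSq_eq_zero (h : phaseRadiusSq x y t = 0) :
    x t = 0 ∧ y t = 0 := by
  obtain ⟨hy, hyx⟩ := (add_eq_zero_iff_of_nonneg (sq_nonneg _) (sq_nonneg _)).mp h
  have hy : y t = 0 := pow_eq_zero_iff two_ne_zero |>.mp hy
  have hyx : y t - x t = 0 := pow_eq_zero_iff two_ne_zero |>.mp hyx
  exact ⟨by linarith, hy⟩

theorem hasDerivAt_phaseRadiusSq
    (hx : HasDerivAt x (2 * y t + y t * x t ^ 2) t)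
    (hy : HasDerivAt y (2 * y t - x t + y t ^ 3 - (x t - y t) ^ 3) t) :
    HasDerivAt (phaseRadiusSq x y)
      (2 * phaseRadiusSq x y t + 2 * phaseRadiusSq x y t ^ 2) t := by
  refine ((hy.pow 2).add ((hy.sub hx).pow 2)).congr_deriv ?_
  simp only [phaseRadiusSq, Pi.sub_apply]
  ring

end PhaseSystem

/-- The phase system `x' = 2y + yx²`, `y' = 2y − x + y³ − (x−y)³` has no
nontrivial periodic solutions: any periodic solution is identically zero. -/
theorem no_nontrivial_periodic_solutions
    (x y : ℝ → ℝ) (hx : Differentiable ℝ x) (hy : Differentiable ℝ y)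
    (hx' : ∀ t : ℝ, deriv x t = 2 * y t + y t * x t ^ 2)
    (hy' : ∀ t : ℝ, deriv y t = 2 * y t - x t + y t ^ 3 - (x t - y t) ^ 3)
    (T : ℝ) (hT : 0 < T)
    (hper : ∀ t : ℝ, x (t + T) = x t ∧ y (t + T) = y t) :
    ∀ t : ℝ, x t = 0 ∧ y t = 0 := by
  have hR : ∀ t, HasDerivAt (phaseRadiusSq x y)
      (2 * phaseRadiusSq x y t + 2 * phaseRadiusSq x y t ^ 2) t := fun t =>
    hasDerivAt_phaseRadiusSq (hx' t ▸ (hx t).hasDerivAt) (hy' t ▸ (hy t).hasDerivAt)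
  have hRper : Function.Periodic (phaseRadiusSq x y) T := fun t => by
    simp only [phaseRadiusSq, (hper t).1, (hper t).2]
  intro t
  have hRnonpos : phaseRadiusSq x y t ≤ 0 :=
    hRper.nonpos_of_mul_le_deriv hT two_pos hR (fun _ => le_add_of_nonneg_right (by positivity)) t
  exact eq_zero_of_phaseRadiusSq_eq_zero (le_antisymm hRnonpos phaseRadiusSq_nonneg)
end

section
/- Let τ₀ > 0 and let φ : (τ₀, ∞) → ℝ be differentiable with dφ/dτ = (−1 + τ·sin φ·(cos φ − sin φ))/(2τ(1 + τ)) and cos(φ(τ) − π/8) ≠ 0 for all τ > τ₀. Then u(τ) = tan(φ(τ) − π/8) satisfies the Riccati equation du/dτ = b(τ) − a(τ)·u(τ)², where a(τ) = ((√2 + 1)τ + 2)/(4τ(τ + 1)) and b(τ) = ((√2 − 1)τ − 2)/(4τ(τ + 1)). -/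
/-!
Since `2 sin φ (cos φ − sin φ) = sin 2φ + cos 2φ − 1 = √2 cos (2φ − π/4) − 1`, the angular
equation reads `ψ' = p − q sin² ψ` for `ψ = φ − π/8`, with `p = b` and `q = 2√2 τ/(4τ(τ+1))`.
Differentiating `tan ψ` multiplies `ψ'` by `1/cos² ψ = 1 + tan² ψ`, and `sin² ψ/cos² ψ = tan² ψ`,
so `u = tan ψ` satisfies `u' = p − (q − p) u²`, and `q − p = a`.
-/

open Real

theorem sin_mul_cos_sub_sin (x : ℝ) :
    sin x * (cos x - sin x) = (√2 - 1 - 2 * √2 * sin (x - π / 8) ^ 2) / 2 := by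
  have h2 : √2 ^ 2 = 2 := sq_sqrt zero_le_two
  rw [sin_sq_eq_half_sub, show 2 * (x - π / 8) = 2 * x - π / 4 by ring, cos_sub,
    cos_pi_div_four, sin_pi_div_four, cos_two_mul, sin_two_mul]
  linear_combination (-(1 : ℝ) / 4 * (2 * cos x ^ 2 - 1 + 2 * sin x * cos x)) * h2
    - sin_sq_add_cos_sq x

theorem HasDerivAt.tan_of_sub_mul_sin_sq {ψ : ℝ → ℝ} {p q x : ℝ}
    (hψ : HasDerivAt ψ (p - q * Real.sin (ψ x) ^ 2) x) (hc : Real.cos (ψ x) ≠ 0) :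
    HasDerivAt (fun s => Real.tan (ψ s)) (p - (q - p) * Real.tan (ψ x) ^ 2) x := by
  refine ((hasDerivAt_tan hc).comp x hψ).congr_deriv ?_
  rw [tan_eq_sin_div_cos]
  field_simp
  linear_combination -p * sin_sq_add_cos_sq (ψ x)

theorem angular_rhs_eq (τ x : ℝ) :
    (-1 + τ * sin x * (cos x - sin x)) / (2 * τ * (1 + τ))
      = ((√2 - 1) * τ - 2) / (4 * τ * (τ + 1))
        - 2 * √2 * τ / (4 * τ * (τ + 1)) * sin (x - π / 8) ^ 2 := by
  rw [mul_assoc τ, sin_mul_cos_sub_sin, div_mul_eq_mul_div, div_sub_div_same,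
    show 4 * τ * (τ + 1) = 2 * (2 * τ * (1 + τ)) by ring, ← mul_div_mul_left _ _ two_ne_zero]
  ring

theorem angular_equation_to_riccati_general
    (τ₀ : ℝ) (φ : ℝ → ℝ)
    (hφ : ∀ τ : ℝ, τ₀ < τ → HasDerivAt φ
      ((-1 + τ * Real.sin (φ τ) * (Real.cos (φ τ) - Real.sin (φ τ))) /
        (2 * τ * (1 + τ))) τ)
    (hcos : ∀ τ : ℝ, τ₀ < τ → Real.cos (φ τ - π / 8) ≠ 0) :
    ∀ τ : ℝ, τ₀ < τ →
      HasDerivAt (fun s => Real.tan (φ s - π / 8))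
        (((Real.sqrt 2 - 1) * τ - 2) / (4 * τ * (τ + 1))
          - ((Real.sqrt 2 + 1) * τ + 2) / (4 * τ * (τ + 1))
            * (Real.tan (φ τ - π / 8)) ^ 2) τ := by
  intro τ hτ
  have hψ := (hφ τ hτ).sub_const (π / 8)
  rw [angular_rhs_eq] at hψ
  have hq : 2 * √2 * τ / (4 * τ * (τ + 1)) - ((√2 - 1) * τ - 2) / (4 * τ * (τ + 1))
      = ((√2 + 1) * τ + 2) / (4 * τ * (τ + 1)) := by
    ring
  simpa only [hq] using hψ.tan_of_sub_mul_sin_sq (hcos τ hτ)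

/-- The substitution `u = tan(φ − π/8)` converts the angular equation
`dφ/dτ = (−1 + τ sin φ (cos φ − sin φ))/(2τ(1+τ))` into the Riccati
equation `du/dτ = b(τ) − a(τ)u²` with
`a(τ) = ((√2+1)τ + 2)/(4τ(τ+1))`, `b(τ) = ((√2−1)τ − 2)/(4τ(τ+1))`. -/
theorem angular_equation_to_riccati
    (τ₀ : ℝ) (hτ₀ : 0 < τ₀) (φ : ℝ → ℝ)
    (hφ : ∀ τ : ℝ, τ₀ < τ → HasDerivAt φ
      ((-1 + τ * Real.sin (φ τ) * (Real.cos (φ τ) - Real.sin (φ τ))) /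
        (2 * τ * (1 + τ))) τ)
    (hcos : ∀ τ : ℝ, τ₀ < τ → Real.cos (φ τ - π / 8) ≠ 0) :
    ∀ τ : ℝ, τ₀ < τ →
      HasDerivAt (fun s => Real.tan (φ s - π / 8))
        (((Real.sqrt 2 - 1) * τ - 2) / (4 * τ * (τ + 1))
          - ((Real.sqrt 2 + 1) * τ + 2) / (4 * τ * (τ + 1))
            * (Real.tan (φ τ - π / 8)) ^ 2) τ :=
  angular_equation_to_riccati_general τ₀ φ hφ hcos
end

section
/- Let a(τ) = ((√2 + 1)τ + 2)/(4τ(τ + 1)) and b(τ) = ((√2 − 1)τ − 2)/(4τ(τ + 1)), and fix any τ₀ > 2(√2 + 1). Then: (i) there exists a differentiable function ψ₁ : [τ₀, ∞) → ℝ satisfying dψ₁/dτ = b(τ) − a(τ)·ψ₁(τ)² and 0 ≤ ψ₁(τ) ≤ √2 − 1 for all τ ≥ τ₀; (ii) there exists a differentiable function ψ₂ : [τ₀, ∞) → ℝ satisfying dψ₂/dτ = b(τ) − a(τ)·ψ₂(τ)² and 1 − √2 ≤ ψ₂(τ) ≤ 0 for all τ ≥ τ₀. -/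
noncomputable def aR (τ : ℝ) : ℝ := ((Real.sqrt 2 + 1) * τ + 2) / (4 * τ * (τ + 1))
noncomputable def bR (τ : ℝ) : ℝ := ((Real.sqrt 2 - 1) * τ - 2) / (4 * τ * (τ + 1))

/-!
Along `u = 0` the Riccati field equals `b(τ) > 0` (as `τ > 2(√2 + 1)`), and along
`u = ±(√2 - 1)` it equals `b - a (√2 - 1)² = (4√2 - 8) / (4τ(τ + 1)) < 0`. Hence the upper
strip `[0, √2 - 1]` is forward invariant. In the lower strip `[1 - √2, 0]` both boundaries are
strict exits instead: a trajectory that rises above `0` never comes back below it, and one that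
drops below `1 - √2` never comes back above it. The initial values whose trajectories leave
through the top, resp. the bottom, thus form disjoint open sets containing `1`, resp. `-1`, and
by connectedness of `ℝ` some initial value leaves through neither (Ważewski's principle).
Solutions on all of `[τ₀, ∞)` exist because the field may be truncated to a globally Lipschitz,
bounded one without changing it on the strips.
-/

open Set Real
open scoped NNReal Topology

section ForwardSolution

variable {E : Type*} [NormedAddCommGroup E] [NormedSpace ℝ E]

def IsForwardSolution (v : ℝ → E → E) (t₀ : ℝ) (ψ : ℝ → E) : Prop :=
  ∀ t, t₀ ≤ t → HasDerivWithinAt ψ (v t (ψ t)) (Ici t₀) t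

namespace IsForwardSolution

variable {v : ℝ → E → E} {t₀ : ℝ} {ψ φ : ℝ → E}

lemma continuousOn (h : IsForwardSolution v t₀ ψ) : ContinuousOn ψ (Ici t₀) :=
  fun t ht => (h t ht).continuousWithinAt

lemma hasDerivWithinAt_Ici (h : IsForwardSolution v t₀ ψ) {t : ℝ} (ht : t₀ ≤ t) :
    HasDerivWithinAt ψ (v t (ψ t)) (Ici t) t :=
  (h t ht).mono (Ici_subset_Ici.mpr ht)

lemma dist_le {K : ℝ≥0} (hv : ∀ t, LipschitzWith K (v t)) (hψ : IsForwardSolution v t₀ ψ)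
    (hφ : IsForwardSolution v t₀ φ) {t : ℝ} (ht : t₀ ≤ t) :
    dist (ψ t) (φ t) ≤ dist (ψ t₀) (φ t₀) * exp (K * (t - t₀)) :=
  dist_le_of_trajectories_ODE hv (hψ.continuousOn.mono Icc_subset_Ici_self)
    (fun _ hs => hψ.hasDerivWithinAt_Ici hs.1) (hφ.continuousOn.mono Icc_subset_Ici_self)
    (fun _ hs => hφ.hasDerivWithinAt_Ici hs.1) le_rfl t ⟨ht, le_rfl⟩

end IsForwardSolution

theorem continuous_apply_of_forall_isForwardSolution {v : ℝ → E → E} {K : ℝ≥0}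
    (hv : ∀ t, LipschitzWith K (v t)) {t₀ : ℝ} {Ψ : E → ℝ → E}
    (hΨ : ∀ x, IsForwardSolution v t₀ (Ψ x)) (hΨ₀ : ∀ x, Ψ x t₀ = x) {t : ℝ} (ht : t₀ ≤ t) :
    Continuous fun x => Ψ x t :=
  (LipschitzWith.of_dist_le' (K := exp (K * (t - t₀))) fun x y => by
    rw [mul_comm]; simpa only [hΨ₀] using (hΨ x).dist_le hv (hΨ y) ht).continuous

end ForwardSolution

section Existence

variable {E : Type*} [NormedAddCommGroup E] [NormedSpace ℝ E] [CompleteSpace E]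
  {v : ℝ → E → E} {K L : ℝ≥0}

theorem exists_eq_forall_mem_Icc_hasDerivWithinAt_of_lipschitzWith
    (hlip : ∀ t, LipschitzWith K (v t)) (hcont : ∀ x, Continuous (v · x))
    (hbdd : ∀ t x, ‖v t x‖ ≤ L) (t₀ : ℝ) (x₀ : E) (n : ℕ) :
    ∃ f : ℝ → E, f t₀ = x₀ ∧
      ∀ t ∈ Icc t₀ (t₀ + n), HasDerivWithinAt f (v t (f t)) (Icc t₀ (t₀ + n)) t := by
  have hP : IsPicardLindelof v (tmin := t₀) (tmax := t₀ + n) ⟨t₀, by simp⟩ x₀ (L * n) 0 L K :=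
    { lipschitzOnWith := fun t _ => (hlip t).lipschitzOnWith
      continuousOn := fun x _ => (hcont x).continuousOn
      norm_le := fun t _ x _ => hbdd t x
      mul_max_le := by simp }
  exact hP.exists_eq_forall_mem_Icc_hasDerivWithinAt₀

theorem exists_isForwardSolution_of_lipschitzWith
    (hlip : ∀ t, LipschitzWith K (v t)) (hcont : ∀ x, Continuous (v · x))
    (hbdd : ∀ t x, ‖v t x‖ ≤ L) (t₀ : ℝ) (x₀ : E) :
    ∃ ψ : ℝ → E, ψ t₀ = x₀ ∧ IsForwardSolution v t₀ ψ := by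
  choose F hF₀ hF using
    exists_eq_forall_mem_Icc_hasDerivWithinAt_of_lipschitzWith hlip hcont hbdd t₀ x₀
  have hF' : ∀ (n : ℕ) t, t ∈ Ico t₀ (t₀ + n) →
      HasDerivWithinAt (F n) (v t (F n t)) (Ici t₀) t := by
    intro n t ht
    have h := hF n t (Ico_subset_Icc_self ht)
    rw [← Ici_inter_Iic] at h
    exact (hasDerivWithinAt_inter (Iic_mem_nhds ht.2)).mp h
  have hagree : ∀ m n : ℕ, m ≤ n → EqOn (F m) (F n) (Icc t₀ (t₀ + m)) := by
    intro m n hmn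
    have hsub : Icc t₀ (t₀ + m) ⊆ Icc t₀ (t₀ + n) := Icc_subset_Icc_right (by gcongr)
    exact ODE_solution_unique_of_mem_Icc_right (s := fun _ => univ)
      (fun t _ => (hlip t).lipschitzOnWith)
      (fun t ht => (hF m t ht).continuousWithinAt)
      (fun t ht => (hF' m t ht).mono (Ici_subset_Ici.mpr ht.1)) (fun _ _ => mem_univ _)
      (fun t ht => ((hF n t (hsub ht)).continuousWithinAt).mono hsub)
      (fun t ht => (hF' n t (Ico_subset_Ico_right (by gcongr) ht)).mono
        (Ici_subset_Ici.mpr ht.1))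
      (fun _ _ => mem_univ _) (by rw [hF₀, hF₀])
  let N : ℝ → ℕ := fun t => ⌊t - t₀⌋₊ + 1
  have hN : ∀ t, t < t₀ + N t := fun t => by
    have := Nat.lt_floor_add_one (t - t₀)
    push_cast [N]
    linarith
  refine ⟨fun t => F (N t) t, hF₀ _, fun t ht => ?_⟩
  have heq : (fun u => F (N u) u) =ᶠ[𝓝[Ici t₀] t] F (N t) := by
    filter_upwards [self_mem_nhdsWithin, mem_nhdsWithin_of_mem_nhds (Iio_mem_nhds (hN t))]
      with u hu hut
    rcases le_total (N u) (N t) with h | h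
    · exact hagree _ _ h ⟨hu, (hN u).le⟩
    · exact (hagree _ _ h ⟨hu, hut.le⟩).symm
  exact (hF' (N t) t ⟨ht, hN t⟩).congr_of_eventuallyEq heq rfl

end Existence

namespace IsForwardSolution

variable {v : ℝ → ℝ → ℝ} {t₀ t₁ t₂ c : ℝ} {ψ : ℝ → ℝ}

lemma le_of_neg_at_level (h : IsForwardSolution v t₀ ψ) (ht₁ : t₀ ≤ t₁) (h₁₂ : t₁ ≤ t₂)
    (hc : ∀ t ∈ Ico t₁ t₂, v t c < 0) (h₁ : ψ t₁ ≤ c) : ψ t₂ ≤ c :=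
  image_le_of_deriv_right_lt_deriv_boundary
    (h.continuousOn.mono fun _ hs => ht₁.trans hs.1)
    (fun _ ht => h.hasDerivWithinAt_Ici (ht₁.trans ht.1)) h₁ (fun _ => hasDerivAt_const _ c)
    (fun t ht hψt => hψt ▸ hc t ht) ⟨h₁₂, le_rfl⟩

lemma ge_of_pos_at_level (h : IsForwardSolution v t₀ ψ) (ht₁ : t₀ ≤ t₁) (h₁₂ : t₁ ≤ t₂)
    (hc : ∀ t ∈ Ico t₁ t₂, 0 < v t c) (h₁ : c ≤ ψ t₁) : c ≤ ψ t₂ :=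
  image_le_of_deriv_right_lt_deriv_boundary' (continuousOn_const (c := c))
    (fun _ _ => hasDerivWithinAt_const _ _ c) h₁
    (h.continuousOn.mono fun _ hs => ht₁.trans hs.1)
    (fun _ ht => h.hasDerivWithinAt_Ici (ht₁.trans ht.1))
    (fun t ht hψt => hψt ▸ hc t ht) ⟨h₁₂, le_rfl⟩

end IsForwardSolution

-- Ważewski's retract principle in dimension one.
theorem exists_forall_mem_Icc_of_exit {X ι : Type*} [TopologicalSpace X] [PreconnectedSpace X]
    {Ψ : X → ι → ℝ} {S : Set ι} {m M : ℝ} (hΨ : ∀ t ∈ S, Continuous (Ψ · t))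
    {p q : X} (hp : ∃ t ∈ S, Ψ p t < m) (hq : ∃ t ∈ S, M < Ψ q t)
    (hexit : ∀ x, ∀ s ∈ S, ∀ t ∈ S, Ψ x s < m → Ψ x t ≤ M) :
    ∃ x, ∀ t ∈ S, Ψ x t ∈ Icc m M := by
  obtain ⟨s, hs, hps⟩ := hp
  obtain ⟨t, ht, hqt⟩ := hq
  by_contra! hleave
  let B := ⋃ t ∈ S, {x | Ψ x t < m}
  let A := ⋃ t ∈ S, {x | M < Ψ x t}
  have hcover : univ ⊆ B ∪ A := fun x _ => by
    obtain ⟨t, ht, hx⟩ := hleave x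
    rcases not_and_or.mp hx with hx | hx
    · exact Or.inl (mem_biUnion ht (not_le.mp hx))
    · exact Or.inr (mem_biUnion ht (not_le.mp hx))
  obtain ⟨x, -, hxB, hxA⟩ := isPreconnected_univ B A
    (isOpen_biUnion fun t ht => isOpen_lt (hΨ t ht) continuous_const)
    (isOpen_biUnion fun t ht => isOpen_lt continuous_const (hΨ t ht)) hcover
    ⟨p, mem_univ p, mem_biUnion hs hps⟩ ⟨q, mem_univ q, mem_biUnion ht hqt⟩
  obtain ⟨s, hs, hxs⟩ := mem_iUnion₂.mp hxB
  obtain ⟨t, ht, hxt⟩ := mem_iUnion₂.mp hxA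
  exact (hexit x s hs t ht hxs).not_gt hxt

lemma sqrt_two_lt_two : √2 < 2 := by
  rw [sqrt_lt' two_pos]; norm_num

lemma aR_pos {t : ℝ} (ht : 0 < t) : 0 < aR t := by
  have := one_lt_sqrt_two
  unfold aR; positivity

lemma aR_le_one {t : ℝ} (ht : 1 ≤ t) : aR t ≤ 1 := by
  have := sqrt_two_lt_two
  rw [aR, div_le_one (by positivity)]
  nlinarith

lemma abs_bR_le_aR {t : ℝ} (ht : 0 < t) : |bR t| ≤ aR t := by
  have := one_lt_sqrt_two
  rw [bR, aR, abs_div, abs_of_pos (by positivity : 0 < 4 * t * (t + 1))]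
  gcongr
  rw [abs_le]; constructor <;> nlinarith

lemma bR_pos {t : ℝ} (ht : 2 * (√2 + 1) < t) : 0 < bR t := by
  have h1 := one_lt_sqrt_two
  have h2 := sq_sqrt (zero_le_two : (0:ℝ) ≤ 2)
  have ht0 : 0 < t := by linarith
  unfold bR
  apply div_pos _ (by positivity)
  nlinarith

lemma bR_sub_aR_mul_sq_neg {t : ℝ} (ht : 0 < t) : bR t - aR t * (√2 - 1) ^ 2 < 0 := by
  have h2 := sq_sqrt (zero_le_two : (0:ℝ) ≤ 2)
  have hden : 0 < 4 * t * (t + 1) := by positivity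
  -- `(√2 + 1) (√2 - 1)² = √2 - 1`, so the terms in `t` cancel
  have hnum : (√2 - 1) * t - 2 - ((√2 + 1) * t + 2) * (√2 - 1) ^ 2 = 4 * √2 - 8 := by
    linear_combination (-(√2 - 1) * t - 2) * h2
  rw [bR, aR, ← mul_div_right_comm, ← sub_div, hnum]
  exact div_neg_of_neg_of_pos (by linarith [sqrt_two_lt_two]) hden

noncomputable def riccatiField (t x : ℝ) : ℝ := bR t - aR t * x ^ 2

noncomputable def clampedRiccatiField (τ₀ t x : ℝ) : ℝ :=
  riccatiField (max t τ₀) (projIcc (-1) 1 (by norm_num) x)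

section Clamped

variable {τ₀ t x : ℝ}

lemma clampedRiccatiField_of_mem (ht : τ₀ ≤ t) (hx : x ∈ Icc (-1) 1) :
    clampedRiccatiField τ₀ t x = riccatiField t x := by
  rw [clampedRiccatiField, max_eq_left ht, projIcc_of_mem _ hx]

lemma clampedRiccatiField_zero_pos (hτ₀ : 2 * (√2 + 1) < τ₀) :
    0 < clampedRiccatiField τ₀ t 0 := by
  have hx : (0 : ℝ) ∈ Icc (-1) 1 := by norm_num
  rw [clampedRiccatiField, projIcc_of_mem _ hx, riccatiField]
  simpa using bR_pos (hτ₀.trans_le (le_max_right t τ₀))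

lemma clampedRiccatiField_neg_of_abs_eq (hτ₀ : 0 < τ₀) (hx : |x| = √2 - 1) :
    clampedRiccatiField τ₀ t x < 0 := by
  have hmem : x ∈ Icc (-1) 1 := by
    rw [mem_Icc, ← abs_le, hx]; linarith [sqrt_two_lt_two]
  rw [clampedRiccatiField, projIcc_of_mem _ hmem, riccatiField, ← sq_abs, hx]
  exact bR_sub_aR_mul_sq_neg (hτ₀.trans_le (le_max_right t τ₀))

lemma abs_clampedRiccatiField_le (hτ₀ : 1 ≤ τ₀) : |clampedRiccatiField τ₀ t x| ≤ 2 := by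
  have hs : 1 ≤ max t τ₀ := hτ₀.trans (le_max_right t τ₀)
  have hb := abs_le.mp (abs_bR_le_aR (zero_lt_one.trans_le hs))
  have ha := aR_le_one hs
  have ha₀ := aR_pos (zero_lt_one.trans_le hs)
  have hy : (projIcc (-1 : ℝ) 1 (by norm_num) x : ℝ) ^ 2 ≤ 1 :=
    sq_le_one_iff_abs_le_one _ |>.mpr (abs_le.mpr (projIcc (-1 : ℝ) 1 _ x).2)
  rw [clampedRiccatiField, riccatiField, abs_le]
  constructor <;> nlinarith [sq_nonneg (projIcc (-1 : ℝ) 1 (by norm_num) x : ℝ)]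

lemma lipschitzWith_clampedRiccatiField (hτ₀ : 1 ≤ τ₀) (t : ℝ) :
    LipschitzWith 2 (clampedRiccatiField τ₀ t) := by
  have hs : 1 ≤ max t τ₀ := hτ₀.trans (le_max_right t τ₀)
  have ha := aR_le_one hs
  have ha₀ := aR_pos (zero_lt_one.trans_le hs)
  refine LipschitzWith.of_dist_le_mul fun x y => ?_
  set p : ℝ → ℝ := fun z => projIcc (-1 : ℝ) 1 (by norm_num) z
  have hp : ∀ z, |p z| ≤ 1 := fun z => abs_le.mpr (projIcc (-1 : ℝ) 1 _ z).2
  have hpxy : |p y - p x| ≤ |x - y| := by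
    rw [abs_sub_comm x y]; exact abs_projIcc_sub_projIcc _
  have hsum : |p y + p x| ≤ 2 := (abs_add_le _ _).trans (by linarith [hp x, hp y])
  simp only [Real.dist_eq, clampedRiccatiField, riccatiField, NNReal.coe_ofNat]
  calc |bR (max t τ₀) - aR (max t τ₀) * p x ^ 2 - (bR (max t τ₀) - aR (max t τ₀) * p y ^ 2)|
      = |aR (max t τ₀) * ((p y + p x) * (p y - p x))| := by congr 1; ring
    _ = aR (max t τ₀) * (|p y + p x| * |p y - p x|) := by
        rw [abs_mul, abs_mul, abs_of_pos ha₀]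
    _ ≤ 1 * (2 * |x - y|) := by gcongr
    _ = 2 * |x - y| := one_mul _

lemma continuous_clampedRiccatiField (hτ₀ : 0 < τ₀) (x : ℝ) :
    Continuous (clampedRiccatiField τ₀ · x) := by
  have hs : ∀ t, 0 < max t τ₀ := fun t => lt_max_of_lt_right hτ₀
  have hden : ∀ t, 4 * max t τ₀ * (max t τ₀ + 1) ≠ 0 := fun t => by have := hs t; positivity
  unfold clampedRiccatiField riccatiField aR bR
  exact (Continuous.div (by fun_prop) (by fun_prop) hden).sub
    ((Continuous.div (by fun_prop) (by fun_prop) hden).mul continuous_const)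

end Clamped

section Strips

variable {τ₀ : ℝ} {ψ : ℝ → ℝ}

lemma IsForwardSolution.of_clampedRiccatiField
    (h : IsForwardSolution (clampedRiccatiField τ₀) τ₀ ψ)
    (hψ : ∀ t, τ₀ ≤ t → ψ t ∈ Icc (-1) 1) : IsForwardSolution riccatiField τ₀ ψ :=
  fun t ht => clampedRiccatiField_of_mem ht (hψ t ht) ▸ h t ht

theorem exists_isForwardSolution_clampedRiccatiField (hτ₀ : 1 ≤ τ₀) (x₀ : ℝ) :
    ∃ ψ : ℝ → ℝ, ψ τ₀ = x₀ ∧ IsForwardSolution (clampedRiccatiField τ₀) τ₀ ψ :=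
  exists_isForwardSolution_of_lipschitzWith (L := 2) (lipschitzWith_clampedRiccatiField hτ₀)
    (continuous_clampedRiccatiField (zero_lt_one.trans_le hτ₀))
    (fun _ _ => by
      simpa only [Real.norm_eq_abs, NNReal.coe_ofNat] using abs_clampedRiccatiField_le hτ₀) τ₀ x₀

theorem exists_riccati_solution_in_upper_strip (hτ₀ : 2 * (√2 + 1) < τ₀) :
    ∃ ψ : ℝ → ℝ, IsForwardSolution riccatiField τ₀ ψ ∧ ∀ t, τ₀ ≤ t → ψ t ∈ Icc 0 (√2 - 1) := by
  have hs := one_lt_sqrt_two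
  have h1 : 1 ≤ τ₀ := by linarith
  obtain ⟨ψ, hψ₀, hψ⟩ := exists_isForwardSolution_clampedRiccatiField h1 0
  have hstrip : ∀ t, τ₀ ≤ t → ψ t ∈ Icc 0 (√2 - 1) := fun t ht =>
    ⟨hψ.ge_of_pos_at_level le_rfl ht (fun _ _ => clampedRiccatiField_zero_pos hτ₀) hψ₀.ge,
      hψ.le_of_neg_at_level le_rfl ht
        (fun _ _ => clampedRiccatiField_neg_of_abs_eq (by linarith) (abs_of_pos (by linarith)))
        (by rw [hψ₀]; linarith)⟩
  refine ⟨ψ, hψ.of_clampedRiccatiField fun t ht => ?_, hstrip⟩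
  exact Icc_subset_Icc (by norm_num) (by linarith [sqrt_two_lt_two]) (hstrip t ht)

theorem exists_riccati_solution_in_lower_strip (hτ₀ : 2 * (√2 + 1) < τ₀) :
    ∃ ψ : ℝ → ℝ, IsForwardSolution riccatiField τ₀ ψ ∧ ∀ t, τ₀ ≤ t → ψ t ∈ Icc (1 - √2) 0 := by
  have hs := one_lt_sqrt_two
  have h1 : 1 ≤ τ₀ := by linarith
  choose Ψ hΨ₀ hΨ using exists_isForwardSolution_clampedRiccatiField h1
  have hexit : ∀ x, ∀ s ∈ Ici τ₀, ∀ t ∈ Ici τ₀, Ψ x s < 1 - √2 → Ψ x t ≤ 0 := by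
    intro x s hs₀ t ht₀ hbelow
    by_contra! habove
    have hneg := (hΨ x).le_of_neg_at_level hs₀ (le_max_left s t)
      (fun _ _ => clampedRiccatiField_neg_of_abs_eq (by linarith)
        (by rw [abs_of_neg (by linarith)]; ring)) hbelow.le
    have hpos := (hΨ x).ge_of_pos_at_level ht₀ (le_max_right s t)
      (fun _ _ => clampedRiccatiField_zero_pos hτ₀) habove.le
    linarith
  obtain ⟨x, hx⟩ := exists_forall_mem_Icc_of_exit
    (fun t ht => continuous_apply_of_forall_isForwardSolution
      (lipschitzWith_clampedRiccatiField h1) hΨ hΨ₀ ht)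
    (p := -1) ⟨τ₀, self_mem_Ici, by rw [hΨ₀]; linarith [sqrt_two_lt_two]⟩
    (q := 1) ⟨τ₀, self_mem_Ici, by rw [hΨ₀]; norm_num⟩ hexit
  refine ⟨Ψ x, (hΨ x).of_clampedRiccatiField fun t ht => ?_, hx⟩
  exact Icc_subset_Icc (by linarith [sqrt_two_lt_two]) (by norm_num) (hx t ht)

end Strips

/-- Existence (via the Warzewski theorem) of solutions of the Riccati
equation `u' = b(τ) − a(τ)u²` staying in the strips
`D₁ = {τ ≥ τ₀, 0 ≤ u ≤ √2 − 1}` and `D₂ = {τ ≥ τ₀, 1 − √2 ≤ u ≤ 0}`. -/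
theorem riccati_solutions_in_strips (τ₀ : ℝ) (hτ₀ : 2 * (Real.sqrt 2 + 1) < τ₀) :
    (∃ ψ₁ : ℝ → ℝ,
      (∀ τ : ℝ, τ₀ ≤ τ →
        HasDerivWithinAt ψ₁ (bR τ - aR τ * ψ₁ τ ^ 2) (Set.Ici τ₀) τ) ∧
      (∀ τ : ℝ, τ₀ ≤ τ → 0 ≤ ψ₁ τ ∧ ψ₁ τ ≤ Real.sqrt 2 - 1)) ∧
    (∃ ψ₂ : ℝ → ℝ,
      (∀ τ : ℝ, τ₀ ≤ τ →
        HasDerivWithinAt ψ₂ (bR τ - aR τ * ψ₂ τ ^ 2) (Set.Ici τ₀) τ) ∧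
      (∀ τ : ℝ, τ₀ ≤ τ → 1 - Real.sqrt 2 ≤ ψ₂ τ ∧ ψ₂ τ ≤ 0)) :=
  ⟨exists_riccati_solution_in_upper_strip hτ₀, exists_riccati_solution_in_lower_strip hτ₀⟩
end

section
/- Let a(τ) = ((√2 + 1)τ + 2)/(4τ(τ + 1)) and b(τ) = ((√2 − 1)τ − 2)/(4τ(τ + 1)), let τ₀ > 0, and let u, ψ : [τ₀, ∞) → ℝ be differentiable solutions of the Riccati equation dv/dτ = b(τ) − a(τ)·v² such that ψ(τ) ≥ 0 and u(τ) > ψ(τ) for all τ ≥ τ₀. Then u(τ) − ψ(τ) tends to 0 as τ → ∞. -/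
open Filter

lemma aR_lb {x : ℝ} (hx : 0 < x) : 1 / (4 * x) ≤ aR x := by
  have h2 : (0:ℝ) ≤ Real.sqrt 2 := Real.sqrt_nonneg 2
  rw [aR, div_le_div_iff₀ (by positivity) (by positivity)]
  nlinarith [mul_nonneg h2 (mul_pos hx hx).le, hx.le]

/-- If `u` and `ψ` are solutions of the Riccati equation
`v' = b(τ) − a(τ)v²` on `[τ₀, ∞)` with `ψ ≥ 0` and `u > ψ`, then
`u(τ) − ψ(τ) → 0` as `τ → ∞`. -/
theorem riccati_solutions_converge_together
    (τ₀ : ℝ) (hτ₀ : 0 < τ₀) (u ψ : ℝ → ℝ)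
    (hu : ∀ τ : ℝ, τ₀ ≤ τ →
      HasDerivWithinAt u (bR τ - aR τ * u τ ^ 2) (Set.Ici τ₀) τ)
    (hψ : ∀ τ : ℝ, τ₀ ≤ τ →
      HasDerivWithinAt ψ (bR τ - aR τ * ψ τ ^ 2) (Set.Ici τ₀) τ)
    (hψ0 : ∀ τ : ℝ, τ₀ ≤ τ → 0 ≤ ψ τ)
    (huψ : ∀ τ : ℝ, τ₀ ≤ τ → ψ τ < u τ) :
    Tendsto (fun τ => u τ - ψ τ) atTop (nhds 0) := by
  set w : ℝ → ℝ := fun τ => u τ - ψ τ with hw_def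
  have hwpos : ∀ τ, τ₀ ≤ τ → 0 < w τ := fun τ hτ => sub_pos.mpr (huψ τ hτ)
  set h : ℝ → ℝ := fun τ => (w τ)⁻¹ - (1/4) * Real.log τ with hh_def
  -- derivative of h within Ici τ₀
  have hderiv : ∀ x, τ₀ ≤ x → HasDerivWithinAt h
      (-(bR x - aR x * u x ^ 2 - (bR x - aR x * ψ x ^ 2)) / (w x)^2 - (1/4) * x⁻¹)
      (Set.Ici τ₀) x := by
    intro x hx
    have hx0 : 0 < x := lt_of_lt_of_le hτ₀ hx
    have hw : HasDerivWithinAt w (bR x - aR x * u x ^ 2 - (bR x - aR x * ψ x ^ 2))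
        (Set.Ici τ₀) x := (hu x hx).sub (hψ x hx)
    have hinv := hw.inv (ne_of_gt (hwpos x hx))
    have hlog : HasDerivWithinAt (fun τ => (1/4) * Real.log τ) ((1/4) * x⁻¹) (Set.Ici τ₀) x :=
      ((Real.hasDerivAt_log (ne_of_gt hx0)).const_mul (1/4)).hasDerivWithinAt
    exact hinv.sub hlog
  -- the derivative is nonneg for x ≥ τ₀
  have hderiv_nonneg : ∀ x, τ₀ ≤ x →
      0 ≤ -(bR x - aR x * u x ^ 2 - (bR x - aR x * ψ x ^ 2)) / (w x)^2 - (1/4) * x⁻¹ := by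
    intro x hx
    have hx0 : 0 < x := lt_of_lt_of_le hτ₀ hx
    have hwx : 0 < w x := hwpos x hx
    have hψx : 0 ≤ ψ x := hψ0 x hx
    have ha : 1 / (4 * x) ≤ aR x := aR_lb hx0
    have ha0 : 0 ≤ aR x := le_trans (by positivity) ha
    have key : -(bR x - aR x * u x ^ 2 - (bR x - aR x * ψ x ^ 2)) / (w x)^2
        = aR x * (u x + ψ x) / w x := by
      field_simp
      ring
    rw [key]
    have hsw : w x ≤ u x + ψ x := by simp only [hw_def]; linarith
    have h1 : aR x ≤ aR x * (u x + ψ x) / w x := by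
      rw [le_div_iff₀ hwx]
      exact mul_le_mul_of_nonneg_left hsw ha0
    have h2 : (1/4) * x⁻¹ ≤ aR x := by
      have : (1/4) * x⁻¹ = 1 / (4 * x) := by field_simp
      rw [this]; exact ha
    linarith
  -- h is monotone on Ici τ₀
  have hmono : MonotoneOn h (Set.Ici τ₀) := by
    apply monotoneOn_of_deriv_nonneg (convex_Ici τ₀)
    · exact fun x hx => (hderiv x hx).continuousWithinAt
    · intro x hx
      rw [interior_Ici] at hx
      exact ((hderiv x (le_of_lt hx)).hasDerivAt (Ici_mem_nhds hx)).differentiableAt.differentiableWithinAt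
    · intro x hx
      rw [interior_Ici] at hx
      rw [((hderiv x (le_of_lt hx)).hasDerivAt (Ici_mem_nhds hx)).deriv]
      exact hderiv_nonneg x (le_of_lt hx)
  -- hence (w τ)⁻¹ → ∞
  have hginf : Tendsto (fun τ => (w τ)⁻¹) atTop atTop := by
    apply tendsto_atTop_mono' atTop
      (show ∀ᶠ τ in atTop, h τ₀ + (1/4) * Real.log τ ≤ (w τ)⁻¹ by
        filter_upwards [eventually_ge_atTop τ₀] with τ hτ
        have := hmono (Set.self_mem_Ici) (Set.mem_Ici.mpr hτ) hτ
        have hτ0' : h τ₀ = (w τ₀)⁻¹ - (1/4) * Real.log τ₀ := rfl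
        simp only [hh_def] at this
        rw [hτ0']
        linarith)
    exact tendsto_atTop_add_const_left _ _
      (Real.tendsto_log_atTop.const_mul_atTop (by norm_num : (0:ℝ) < 1/4))
  -- conclude
  have : Tendsto (fun τ => ((w τ)⁻¹)⁻¹) atTop (nhds 0) := hginf.inv_tendsto_atTop
  refine this.congr' ?_
  filter_upwards [eventually_ge_atTop τ₀] with τ hτ
  rw [inv_inv]
end

section
/- Let a(τ) = ((√2 + 1)τ + 2)/(4τ(τ + 1)) and b(τ) = ((√2 − 1)τ − 2)/(4τ(τ + 1)), fix τ₀ > 2(√2 + 1), and let ψ : [τ₀, ∞) → ℝ be a differentiable solution of the Riccati equation dψ/dτ = b(τ) − a(τ)·ψ² with 0 ≤ ψ(τ) ≤ √2 − 1 for all τ ≥ τ₀. Then ψ(τ) tends to √2 − 1 as τ → ∞. -/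
open Filter

/-!
On the strip, `b - a p² ≥ (√2 - 1 - p) / (8τ) - τ⁻²`: the part of the numerator of `b - a p²`
that is linear in `τ` equals `τ (√2 + 1) ((√2 - 1)² - p²)`. Hence the gap `w = √2 - 1 - ψ ≥ 0`
satisfies `w' ≤ -w / (8τ) + τ⁻²`, which makes `τ^(1/8) w + (8/7) τ^(-7/8)` nonincreasing,
so `w = O(τ^(-1/8))`.
-/

open Set Real Topology

section DifferentialInequality

variable {f f' : ℝ → ℝ} {t₀ c K : ℝ}

theorem antitoneOn_rpow_mul_add_of_deriv_le (ht₀ : 0 < t₀) (hc : c ≠ 1)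
    (hf : ∀ t, t₀ ≤ t → HasDerivWithinAt f (f' t) (Ici t₀) t)
    (hf' : ∀ t, t₀ < t → f' t ≤ -c * f t / t + K / t ^ 2) :
    AntitoneOn (fun t => t ^ c * f t + K / (1 - c) * t ^ (c - 1)) (Ici t₀) := by
  have hc' : 1 - c ≠ 0 := sub_ne_zero.2 (Ne.symm hc)
  have hV : ∀ t, t₀ ≤ t → HasDerivWithinAt (fun t => t ^ c * f t + K / (1 - c) * t ^ (c - 1))
      (c * t ^ (c - 1) * f t + t ^ c * f' t + K / (1 - c) * ((c - 1) * t ^ (c - 1 - 1)))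
      (Ici t₀) t := fun t ht =>
    have ht' : t ≠ 0 := (ht₀.trans_le ht).ne'
    (((hasDerivAt_rpow_const (Or.inl ht')).hasDerivWithinAt.mul (hf t ht)).add
      ((hasDerivAt_rpow_const (Or.inl ht')).hasDerivWithinAt.const_mul _))
  refine antitoneOn_of_hasDerivWithinAt_nonpos (convex_Ici t₀)
    (f' := fun t =>
      c * t ^ (c - 1) * f t + t ^ c * f' t + K / (1 - c) * ((c - 1) * t ^ (c - 1 - 1)))
    (fun t ht => (hV t ht).continuousWithinAt) (fun t ht => ?_) (fun t ht => ?_)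
  · rw [interior_Ici] at ht
    exact (hV t ht.le).mono interior_subset
  · rw [interior_Ici] at ht
    have htpos : 0 < t := ht₀.trans ht
    have hK : K / (1 - c) * (c - 1) = -K := by field_simp; ring
    calc c * t ^ (c - 1) * f t + t ^ c * f' t + K / (1 - c) * ((c - 1) * t ^ (c - 1 - 1))
        = t ^ c * (f' t - (-c * f t / t + K / t ^ 2)) := by
          rw [← mul_assoc, hK, rpow_sub_one htpos.ne' (c - 1), rpow_sub_one htpos.ne' c]
          field_simp
          ring
      _ ≤ 0 := mul_nonpos_of_nonneg_of_nonpos (rpow_nonneg htpos.le c) (sub_nonpos.2 (hf' t ht))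

theorem tendsto_zero_of_nonneg_of_deriv_le (ht₀ : 0 < t₀) (hc₀ : 0 < c) (hc : c ≠ 1)
    (hf : ∀ t, t₀ ≤ t → HasDerivWithinAt f (f' t) (Ici t₀) t)
    (hf' : ∀ t, t₀ < t → f' t ≤ -c * f t / t + K / t ^ 2)
    (hf₀ : ∀ t, t₀ ≤ t → 0 ≤ f t) :
    Tendsto f atTop (𝓝 0) := by
  set V := fun t => t ^ c * f t + K / (1 - c) * t ^ (c - 1)
  have hbound : ∀ t, t₀ ≤ t → f t ≤ V t₀ * t ^ (-c) - K / (1 - c) * t⁻¹ := by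
    intro t ht
    have htpos : 0 < t := ht₀.trans_le ht
    have hVt := antitoneOn_rpow_mul_add_of_deriv_le ht₀ hc hf hf' self_mem_Ici ht ht
    have hVt' : V t * t ^ (-c) = f t + K / (1 - c) * t⁻¹ := by
      simp only [V]
      rw [rpow_neg htpos.le, rpow_sub_one htpos.ne']
      have : t ^ c ≠ 0 := (rpow_pos_of_pos htpos c).ne'
      field_simp
    have := mul_le_mul_of_nonneg_right hVt (rpow_nonneg htpos.le (-c))
    linarith
  have hlim : Tendsto (fun t => V t₀ * t ^ (-c) - K / (1 - c) * t⁻¹) atTop (𝓝 0) := by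
    simpa using ((tendsto_rpow_neg_atTop hc₀).const_mul (V t₀)).sub
      (tendsto_inv_atTop_zero.const_mul (K / (1 - c)))
  exact tendsto_of_tendsto_of_tendsto_of_le_of_le' tendsto_const_nhds hlim
    (eventually_atTop.2 ⟨t₀, hf₀⟩) (eventually_atTop.2 ⟨t₀, hbound⟩)

end DifferentialInequality

theorem bR_sub_aR_mul_sq_ge {τ p : ℝ} (hτ : 1 ≤ τ) (hp₀ : 0 ≤ p) (hp : p ≤ √2 - 1) :
    (√2 - 1 - p) / (8 * τ) - 1 / τ ^ 2 ≤ bR τ - aR τ * p ^ 2 := by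
  have hs : √2 ^ 2 = 2 := sq_sqrt zero_le_two
  have hτ₀ : 0 < τ := by linarith
  have hgap : 0 ≤ √2 - 1 - p := by linarith
  have hp₁ : 0 ≤ 1 - p ^ 2 := by nlinarith [sqrt_nonneg 2]
  rw [← sub_nonneg]
  calc 0 ≤ (τ * (τ - 1) * (√2 - 1 - p) + 4 * τ * (1 - p ^ 2) + 8
        + 2 * τ ^ 2 * (√2 - 1 - p) * p * (√2 + 1)) / (8 * τ ^ 2 * (τ + 1)) := by positivity
    _ = (τ * (τ - 1) * (√2 - 1 - p) + 4 * τ * (1 - p ^ 2) + 8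
        + 2 * τ ^ 2 * (√2 - 1 - p) * p * (√2 + 1) - 2 * τ ^ 2 * p * (√2 ^ 2 - 2))
          / (8 * τ ^ 2 * (τ + 1)) := by rw [hs]; ring
    _ = _ := by unfold bR aR; field_simp; ring

/-- A solution of the Riccati equation `ψ' = b(τ) − a(τ)ψ²` staying in the
strip `0 ≤ ψ ≤ √2 − 1` on `[τ₀, ∞)` (with `τ₀ > 2(√2+1)`) tends to
`√2 − 1` at infinity. -/
theorem riccati_solution_in_D₁_tends_to_limit
    (τ₀ : ℝ) (hτ₀ : 2 * (Real.sqrt 2 + 1) < τ₀) (ψ : ℝ → ℝ)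
    (hψ : ∀ τ : ℝ, τ₀ ≤ τ →
      HasDerivWithinAt ψ (bR τ - aR τ * ψ τ ^ 2) (Set.Ici τ₀) τ)
    (hbounds : ∀ τ : ℝ, τ₀ ≤ τ → 0 ≤ ψ τ ∧ ψ τ ≤ Real.sqrt 2 - 1) :
    Tendsto ψ atTop (nhds (Real.sqrt 2 - 1)) := by
  have h1τ₀ : 1 ≤ τ₀ := by linarith [sqrt_nonneg 2]
  have hgap : Tendsto (fun τ => √2 - 1 - ψ τ) atTop (𝓝 0) := by
    refine tendsto_zero_of_nonneg_of_deriv_le (K := 1) (by linarith)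
      (by norm_num : (0 : ℝ) < 1 / 8) (by norm_num) (fun τ hτ => (hψ τ hτ).const_sub _)
      (fun τ hτ => ?_) (fun τ hτ => sub_nonneg.2 (hbounds τ hτ).2)
    obtain ⟨hψ₀, hψ₁⟩ := hbounds τ hτ.le
    have hineq := bR_sub_aR_mul_sq_ge (h1τ₀.trans hτ.le) hψ₀ hψ₁
    linarith [show -(1 / 8) * (√2 - 1 - ψ τ) / τ = -((√2 - 1 - ψ τ) / (8 * τ)) by ring]
  simpa using hgap.const_sub (√2 - 1)
end

section
/- For all real numbers x and y, the identity (y − x)³ + y³ + 2y − x = (y − x/2)·(2y² − 2xy + 2x² + 2) holds, and 2y² − 2xy + 2x² + 2 > 0. Consequently, (y − x)³ + y³ + 2y − x = 0 if and only if y = x/2; i.e., all extrema of the phase curves of the system dx/dt = 2y + yx², dy/dt = 2y − x + y³ − (x − y)³ are located on the straight line y = x/2. -/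
/-- The cubic `P₃(x,y) = (y−x)³ + y³ + 2y − x` factors as
`(y − x/2)(2y² − 2xy + 2x² + 2)` with positive second factor, so all
extrema of the phase curves of the system `x' = 2y + yx²`,
`y' = 2y − x + y³ − (x−y)³` lie on the line `y = x/2`. -/
theorem extrema_on_line (x y : ℝ) :
    (y - x) ^ 3 + y ^ 3 + 2 * y - x =
      (y - x / 2) * (2 * y ^ 2 - 2 * x * y + 2 * x ^ 2 + 2) ∧
    0 < 2 * y ^ 2 - 2 * x * y + 2 * x ^ 2 + 2 ∧
    ((y - x) ^ 3 + y ^ 3 + 2 * y - x = 0 ↔ y = x / 2) := by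
  have hpos : 0 < 2 * y ^ 2 - 2 * x * y + 2 * x ^ 2 + 2 := by nlinarith [sq_nonneg (x - y), sq_nonneg x, sq_nonneg y]
  have hfac : (y - x) ^ 3 + y ^ 3 + 2 * y - x =
      (y - x / 2) * (2 * y ^ 2 - 2 * x * y + 2 * x ^ 2 + 2) := by ring
  refine ⟨hfac, hpos, ?_⟩
  rw [hfac, mul_eq_zero]
  constructor
  · rintro (h | h)
    · linarith
    · linarith
  · intro h; left; linarith
end
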